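/- arXiv:2309.02831 — 9 statements merged into one kernel-verified Lean document; each statement's English description precedes it below -/
import Mathlib

section
/- Let R be a commutative ring with unity and x, y ∈ R. Then the principal ideals (x) and (y) are equal if and only if there exists u ∈ R such that y = xu and [u] is a unit of R/Ann(x). (Equivalently, the J-class of x in the multiplicative semigroup of R is exactly the set {xu : u ∈ R, [u] a unit of R/Ann(x)}.) -/
/-! The image of `u` in `R/Ann(x)` is a unit exactly when `x * u ∣ x`, so for `y = x * u` both
sides of the equivalence say `x ∣ y` and `y ∣ x`. -/

/-- The annihilator `Ann(x) = {y ∈ R | x * y = 0}` of an element `x` of a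
commutative ring `R`, as an ideal of `R`. -/
def ann {R : Type*} [CommRing R] (x : R) : Ideal R where
  carrier := {y : R | x * y = 0}
  add_mem' := by
    intro a b ha hb
    simp only [Set.mem_setOf_eq] at *
    rw [mul_add, ha, hb, add_zero]
  zero_mem' := by simp
  smul_mem' := by
    intro c y hy
    simp only [smul_eq_mul, Set.mem_setOf_eq] at *
    rw [mul_comm c y, ← mul_assoc, hy, zero_mul]

theorem Ideal.span_singleton_eq_span_singleton_iff_dvd_dvd {R : Type*} [CommSemiring R]
    {x y : R} : Ideal.span {x} = Ideal.span {y} ↔ x ∣ y ∧ y ∣ x := by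
  rw [le_antisymm_iff, Ideal.span_singleton_le_span_singleton,
    Ideal.span_singleton_le_span_singleton, and_comm]

section

variable {R : Type*} [CommRing R]

theorem mem_ann_iff {x y : R} : y ∈ ann x ↔ x * y = 0 := Iff.rfl

theorem Ideal.Quotient.mk_ann_eq_one_iff {x u : R} :
    Ideal.Quotient.mk (ann x) u = 1 ↔ x * u = x := by
  rw [← map_one (Ideal.Quotient.mk (ann x)), Ideal.Quotient.mk_eq_mk_iff_sub_mem, mem_ann_iff,
    mul_sub, mul_one, sub_eq_zero]

theorem isUnit_mk_ann_iff_dvd {x u : R} :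
    IsUnit (Ideal.Quotient.mk (ann x) u) ↔ x * u ∣ x := by
  simp only [isUnit_iff_exists_inv, Ideal.Quotient.mk_surjective.exists, ← map_mul,
    Ideal.Quotient.mk_ann_eq_one_iff]
  exact exists_congr fun v ↦ by rw [mul_assoc, eq_comm]

end

/-- `(x) = (y)` iff `y = xu` for some `u` whose image in `R/Ann(x)` is a unit;
i.e. the `J`-class of `x` is `{xu : u ∈ R, [u] a unit of R/Ann(x)}`. -/
theorem span_singleton_eq_iff_exists_unit_mod_ann {R : Type*} [CommRing R] (x y : R) :
    Ideal.span {x} = Ideal.span {y} ↔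
      ∃ u : R, y = x * u ∧ IsUnit (Ideal.Quotient.mk (ann x) u) := by
  rw [Ideal.span_singleton_eq_span_singleton_iff_dvd_dvd]
  constructor
  · rintro ⟨⟨u, rfl⟩, hux⟩
    exact ⟨u, rfl, isUnit_mk_ann_iff_dvd.2 hux⟩
  · rintro ⟨u, rfl, hu⟩
    exact ⟨dvd_mul_right x u, isUnit_mk_ann_iff_dvd.1 hu⟩
end

section
/- Let R be a commutative ring with unity and x, y ∈ R. Then J_x = J_y (as subsets of R) if and only if (x) = (y). -/
/-- `J_x = {xu : u ∈ R, [u] a unit of R/Ann(x)}`. -/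
def Jset {R : Type*} [CommRing R] (x : R) : Set R :=
  {z : R | ∃ u : R, z = x * u ∧ IsUnit (Ideal.Quotient.mk (ann x) u)}


section

variable {R : Type*} [CommRing R]

lemma ann_eq_annihilator_span (x : R) : ann x = (Ideal.span {x}).annihilator := by
  ext t
  rw [Ideal.span, Submodule.mem_annihilator_span_singleton, smul_eq_mul, mul_comm]
  rfl

lemma ann_eq_of_span_eq {x y : R} (h : Ideal.span {x} = Ideal.span {y}) : ann x = ann y := by
  rw [ann_eq_annihilator_span, ann_eq_annihilator_span, h]

lemma isUnit_mk_ann_of_mul_eq_self {x a b : R} (h : x * (a * b) = x) :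
    IsUnit (Ideal.Quotient.mk (ann x) a) := by
  refine .of_mul_eq_one (Ideal.Quotient.mk (ann x) b) ?_
  rw [← map_mul, ← map_one (Ideal.Quotient.mk (ann x)), Ideal.Quotient.mk_eq_mk_iff_sub_mem]
  change x * (a * b - 1) = 0
  rw [mul_sub, h, mul_one, sub_self]

lemma self_mem_Jset (x : R) : x ∈ Jset x :=
  ⟨1, (mul_one x).symm, by rw [map_one]; exact isUnit_one⟩

lemma Jset_subset_span (x : R) : Jset x ⊆ Ideal.span {x} := by
  rintro _ ⟨u, rfl, -⟩
  exact Ideal.mul_mem_right u _ (Ideal.mem_span_singleton_self x)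

lemma Jset_subset_of_span_eq {x y : R} (h : Ideal.span {x} = Ideal.span {y}) :
    Jset x ⊆ Jset y := by
  obtain ⟨a, hxa⟩ := Ideal.span_singleton_le_span_singleton.mp h.le
  obtain ⟨b, hyb⟩ := Ideal.span_singleton_le_span_singleton.mp h.ge
  have ha : IsUnit (Ideal.Quotient.mk (ann x) a) := ann_eq_of_span_eq h ▸
    isUnit_mk_ann_of_mul_eq_self (by rw [← mul_assoc, ← hxa, ← hyb])
  rintro _ ⟨u, rfl, hu⟩
  refine ⟨a * u, by rw [hxa, mul_assoc], ?_⟩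
  change IsUnit (Ideal.Quotient.mk (ann y) (a * u))
  rw [← ann_eq_of_span_eq h, map_mul]
  exact ha.mul hu

end

/-- For `x, y` in a commutative ring, `J_x = J_y` iff `(x) = (y)`. -/
theorem Jset_eq_iff_span_eq {R : Type*} [CommRing R] (x y : R) :
    Jset x = Jset y ↔ Ideal.span {x} = Ideal.span {y} := by
  constructor
  · intro h
    apply le_antisymm <;> rw [Ideal.span_singleton_le_iff_mem]
    · exact Jset_subset_span y (h ▸ self_mem_Jset x)
    · exact Jset_subset_span x (h ▸ self_mem_Jset y)
  · intro h
    exact (Jset_subset_of_span_eq h).antisymm (Jset_subset_of_span_eq h.symm)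
end

section
/- Let R be a commutative ring with unity and x ∈ R with (x) = (x)². Then the quotient map R → R/Ann(x), restricted to the set J_x, is injective and its image is exactly the set of units of R/Ann(x). Consequently (since the quotient map preserves multiplication) J_x is a group under multiplication, isomorphic to the unit group of R/Ann(x). -/
/-! If `(x) = (x)²` then `x = x²t` for some `t`. Then `[x][t] = 1` in `R/Ann(x)`, and
`Ann(x) ∩ (x) = 0`, since `x (xu) = 0` gives `xu = t x (xu) = 0`. So `R → R/Ann(x)` is
injective on `(x) ⊇ J_x`, and as `[x]` is a unit, every unit `z` is the image of
`xu ∈ J_x` for any `u` with `[u] = z [x]⁻¹`. -/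

section

variable {R : Type*} [CommRing R] {x : R}

theorem mem_ann {y : R} : y ∈ ann x ↔ x * y = 0 := Iff.rfl

theorem sq_dvd_of_span_singleton_eq_sq (h : Ideal.span {x} = Ideal.span {x} ^ 2) :
    x ^ 2 ∣ x := by
  rw [← Ideal.mem_span_singleton, ← Ideal.span_singleton_pow, ← h]
  exact Ideal.mem_span_singleton_self x

theorem isUnit_mk_ann_of_sq_dvd (hx : x ^ 2 ∣ x) : IsUnit (Ideal.Quotient.mk (ann x) x) := by
  obtain ⟨t, ht⟩ := hx
  refine IsUnit.of_mul_eq_one (Ideal.Quotient.mk (ann x) t) ?_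
  rw [← map_mul, ← map_one (Ideal.Quotient.mk (ann x)), Ideal.Quotient.eq, mem_ann]
  linear_combination -ht

theorem injOn_mk_ann_span_singleton_of_sq_dvd (hx : x ^ 2 ∣ x) :
    Set.InjOn (Ideal.Quotient.mk (ann x)) (Ideal.span {x}) := by
  obtain ⟨t, ht⟩ := hx
  intro a ha b hb hab
  obtain ⟨u, rfl⟩ := Ideal.mem_span_singleton.mp ha
  obtain ⟨v, rfl⟩ := Ideal.mem_span_singleton.mp hb
  have hann : x * (x * u - x * v) = 0 := mem_ann.mp (Ideal.Quotient.eq.mp hab)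
  linear_combination (u - v) * ht + t * hann

theorem Jset_subset_span_singleton : Jset x ⊆ Ideal.span {x} := by
  rintro _ ⟨u, rfl, -⟩
  exact Ideal.mem_span_singleton.mpr (dvd_mul_right x u)

theorem image_mk_Jset_of_isUnit (hx : IsUnit (Ideal.Quotient.mk (ann x) x)) :
    Ideal.Quotient.mk (ann x) '' Jset x = {z | IsUnit z} := by
  ext z
  constructor
  · rintro ⟨_, ⟨u, rfl, hu⟩, rfl⟩
    rw [map_mul]
    exact hx.mul hu
  · intro hz
    obtain ⟨a, ha⟩ := hx
    obtain ⟨u, hu⟩ := Ideal.Quotient.mk_surjective (I := ann x) (z * ↑a⁻¹)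
    refine ⟨x * u, ⟨u, rfl, hu ▸ hz.mul a⁻¹.isUnit⟩, ?_⟩
    rw [map_mul, hu, ← ha, mul_left_comm, Units.mul_inv, mul_one]

end

/-- If `(x) = (x)²` then the quotient map `R → R/Ann(x)` is injective on `J_x`
and maps `J_x` onto the group of units of `R/Ann(x)`; since this map is
multiplicative, `J_x` is a group isomorphic to the unit group of `R/Ann(x)`. -/
theorem Jset_group_of_span_idempotent {R : Type*} [CommRing R] (x : R)
    (h : Ideal.span {x} = Ideal.span {x} ^ 2) :
    Set.InjOn (Ideal.Quotient.mk (ann x)) (Jset x) ∧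
      (Ideal.Quotient.mk (ann x)) '' (Jset x) = {z : R ⧸ ann x | IsUnit z} := by
  have hx : x ^ 2 ∣ x := sq_dvd_of_span_singleton_eq_sq h
  exact ⟨(injOn_mk_ann_span_singleton_of_sq_dvd hx).mono Jset_subset_span_singleton,
    image_mk_Jset_of_isUnit (isUnit_mk_ann_of_sq_dvd hx)⟩
end

section
/- Let R be a commutative ring with unity and I an ideal of R. Then ε(I) is an idempotent ideal (ε(I)² = ε(I)), ε(I) ⊆ I, and every idempotent ideal J with J ⊆ I satisfies J ⊆ ε(I); that is, ε(I) is the greatest idempotent ideal of R contained in I. -/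
/-- `eps I` is the sum (supremum) of all idempotent ideals of `R` contained in
the ideal `I`. -/
def eps {R : Type*} [CommRing R] (I : Ideal R) : Ideal R :=
  sSup {J : Ideal R | J * J = J ∧ J ≤ I}

/-- `ε(I)` is an idempotent ideal contained in `I`, and it is the greatest such:
every idempotent ideal contained in `I` is contained in `ε(I)`. -/
theorem eps_greatest_idempotent {R : Type*} [CommRing R] (I : Ideal R) :
    eps I * eps I = eps I ∧ eps I ≤ I ∧
      ∀ J : Ideal R, J * J = J → J ≤ I → J ≤ eps I := by
  have hle : ∀ J : Ideal R, J * J = J → J ≤ I → J ≤ eps I := fun J h1 h2 =>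
    le_sSup ⟨h1, h2⟩
  have hI : eps I ≤ I := sSup_le fun J hJ => hJ.2
  refine ⟨le_antisymm Ideal.mul_le_left ?_, hI, hle⟩
  refine sSup_le fun J hJ => ?_
  calc J = J * J := hJ.1.symm
    _ ≤ eps I * eps I := Ideal.mul_mono (hle J hJ.1 hJ.2) (hle J hJ.1 hJ.2)
end

section
/- Let R be a commutative ring with unity. For all ideals I, J of R, ε(IJ) = ε(I)ε(J); in particular ε is a multiplicative homomorphism from the semigroup of ideals of R onto the semilattice of idempotent ideals of R, and ε(e) = e for every idempotent ideal e. -/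
section

variable {R : Type*} [CommRing R]

lemma eps_le (I : Ideal R) : eps I ≤ I :=
  sSup_le fun _ hJ => hJ.2

lemma le_eps {I J : Ideal R} (hJ : IsIdempotentElem J) (hJI : J ≤ I) : J ≤ eps I :=
  le_sSup ⟨hJ, hJI⟩

lemma eps_mono {I J : Ideal R} (h : I ≤ J) : eps I ≤ eps J :=
  sSup_le fun _ hK => le_eps hK.1 (hK.2.trans h)

lemma isIdempotentElem_eps (I : Ideal R) : IsIdempotentElem (eps I) := by
  refine le_antisymm Ideal.mul_le_left (sSup_le fun J hJ => ?_)
  calc J = J * J := hJ.1.symm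
    _ ≤ eps I * eps I := Ideal.mul_mono (le_sSup hJ) (le_sSup hJ)

lemma eps_eq_self {e : Ideal R} (he : IsIdempotentElem e) : eps e = e :=
  le_antisymm (eps_le e) (le_eps he le_rfl)

lemma eps_mul_le (I J : Ideal R) : eps (I * J) ≤ eps I * eps J :=
  calc eps (I * J) = eps (I * J) * eps (I * J) := (isIdempotentElem_eps _).symm
    _ ≤ eps I * eps J :=
      Ideal.mul_mono (eps_mono Ideal.mul_le_left) (eps_mono Ideal.mul_le_right)

lemma mul_eps_le (I J : Ideal R) : eps I * eps J ≤ eps (I * J) :=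
  le_eps ((isIdempotentElem_eps I).mul (isIdempotentElem_eps J))
    (Ideal.mul_mono (eps_le I) (eps_le J))

end

/-- `ε(IJ) = ε(I)ε(J)` for all ideals `I, J`; in particular `ε` is a
multiplicative homomorphism from the semigroup of ideals of `R` onto the
semilattice of idempotent ideals (its values are idempotent and it fixes every
idempotent ideal). -/
theorem eps_mul {R : Type*} [CommRing R] :
    (∀ I J : Ideal R, eps (I * J) = eps I * eps J) ∧
    (∀ I : Ideal R, eps I * eps I = eps I) ∧
    (∀ e : Ideal R, e * e = e → eps e = e) :=
  ⟨fun I J => le_antisymm (eps_mul_le I J) (mul_eps_le I J), isIdempotentElem_eps,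
    fun _ he => eps_eq_self he⟩
end

section
/- Let R be a Dedekind domain and let R₀ = {x ∈ R : x is not a unit}. Then ⋂_{m≥1} R₀^m = {0}; consequently the multiplicative semigroup of R is a semilattice of two semigroups, namely its group of units and the stratified extension R₀ of the trivial group {0}. -/
open Pointwise

open UniqueFactorizationMonoid in
lemma aux_card_le {R : Type*} [CommRing R] [IsDedekindDomain R] :
    ∀ m : ℕ, 1 ≤ m → ∀ x : R, x ∈ ({x : R | ¬ IsUnit x} : Set R) ^ m → x ≠ 0 →
      m ≤ Multiset.card (normalizedFactors (Ideal.span {x})) := by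
  intro m
  induction m with
  | zero => intro h; omega
  | succ n ih =>
    intro _ x hx hx0
    rcases Nat.eq_or_lt_of_le (Nat.one_le_iff_ne_zero.mpr (Nat.succ_ne_zero n)) with h1 | h1
    · -- n = 0
      have hn : n = 0 := by omega
      subst hn
      rw [pow_one] at hx
      have hspan : ¬ IsUnit (Ideal.span ({x} : Set R)) := by
        rw [Ideal.isUnit_iff, Ideal.span_singleton_eq_top]
        exact hx
      have hb : Ideal.span ({x} : Set R) ≠ 0 := by
        simpa [Ideal.span_singleton_eq_bot] using hx0
      have := Multiset.card_pos.mpr ((normalizedFactors_pos _ hb).mpr hspan).ne'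
      omega
    · have hn : 1 ≤ n := by omega
      rw [pow_succ] at hx
      rcases Set.mem_mul.mp hx with ⟨a, ha, b, hb, rfl⟩
      have ha0 : a ≠ 0 := fun h => hx0 (by simp [h])
      have hb0 : b ≠ 0 := fun h => hx0 (by simp [h])
      have hA : n ≤ Multiset.card (normalizedFactors (Ideal.span {a})) :=
        ih hn a ha ha0
      have hBspan : ¬ IsUnit (Ideal.span ({b} : Set R)) := by
        rw [Ideal.isUnit_iff, Ideal.span_singleton_eq_top]; exact hb
      have hBne : Ideal.span ({b} : Set R) ≠ 0 := by
        simpa [Ideal.span_singleton_eq_bot] using hb0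
      have hB : 0 < Multiset.card (normalizedFactors (Ideal.span ({b} : Set R))) := by
        exact Multiset.card_pos.mpr ((normalizedFactors_pos _ hBne).mpr hBspan).ne'
      have hAne : Ideal.span ({a} : Set R) ≠ 0 := by
        simpa [Ideal.span_singleton_eq_bot] using ha0
      have hmul : Ideal.span ({a * b} : Set R) =
          Ideal.span ({a} : Set R) * Ideal.span ({b} : Set R) :=
        (Ideal.span_singleton_mul_span_singleton a b).symm
      rw [hmul, normalizedFactors_mul hAne hBne, Multiset.card_add]
      omega

/-- For a Dedekind domain `R` with `R₀ = {x ∈ R | x not a unit}`, one has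
`⋂_{m ≥ 1} R₀^m = {0}`; consequently the multiplicative semigroup of `R` is a
semilattice of two semigroups, its group of units `U` and the stratified
extension `R₀` of the trivial group `{0}` (i.e. `R = U ∪ R₀`, `UU ⊆ U`,
`UR₀ ⊆ R₀` and `R₀R₀ ⊆ R₀`). -/
theorem iInter_pow_nonunits_eq_zero {R : Type*} [CommRing R] [IsDedekindDomain R] :
    (⋂ m ∈ Set.Ici 1, ({x : R | ¬ IsUnit x} : Set R) ^ m = {(0 : R)}) ∧
    ({x : R | IsUnit x} * {x : R | IsUnit x} ⊆ {x : R | IsUnit x}) ∧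
    ({x : R | IsUnit x} * {x : R | ¬ IsUnit x} ⊆ {x : R | ¬ IsUnit x}) ∧
    ({x : R | ¬ IsUnit x} * {x : R | ¬ IsUnit x} ⊆ {x : R | ¬ IsUnit x}) ∧
    ({x : R | IsUnit x} ∪ {x : R | ¬ IsUnit x} = (Set.univ : Set R)) := by
  refine ⟨?_, ?_, ?_, ?_, ?_⟩
  · ext x
    simp only [Set.mem_iInter, Set.mem_Ici, Set.mem_singleton_iff]
    constructor
    · intro hx
      by_contra hx0
      have h := hx (Multiset.card
        (UniqueFactorizationMonoid.normalizedFactors (Ideal.span ({x} : Set R))) + 1)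
        (by omega)
      have := aux_card_le _ (by omega) x h hx0
      omega
    · rintro rfl m hm
      have h0 : (0 : R) ∈ ({x : R | ¬ IsUnit x} : Set R) := by
        simp [isUnit_zero_iff]
      induction m with
      | zero => omega
      | succ n ihn =>
        rcases Nat.eq_or_lt_of_le hm with h1 | h1
        · rw [← h1, pow_one]; exact h0
        · rw [pow_succ]
          have := Set.mul_mem_mul (ihn (by omega)) h0
          simpa using this
  · rintro z ⟨a, ha, b, hb, rfl⟩
    exact ha.mul hb
  · rintro z ⟨a, ha, b, hb, rfl⟩
    intro h
    exact hb (isUnit_of_mul_isUnit_right h)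
  · rintro z ⟨a, ha, b, hb, rfl⟩
    intro h
    exact hb (isUnit_of_mul_isUnit_right h)
  · ext x; simp [em]
end

section
/- Let R be a Dedekind domain, let R₀ = {x ∈ R : x is not a unit}, let D₀ = {I : I a proper ideal of R}, and fix an integer i ≥ 2. Then R₀^i = {x ∈ R : (x) ∈ D₀^i} if and only if R is a principal ideal domain. -/
/-!
In a PID, `x ↦ (x)` maps the nonunits onto the proper ideals and `(x) = (y)` only for associates,
so the two sets agree. Otherwise the (atomic) Dedekind domain `R` is not a UFD, so it has an
irreducible non-prime `a`. No nonunit divisor `f` of a power of `a` generates a prime ideal (it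
would divide, hence be associated to, `a`), so `(f)` has at least two prime ideal factors; in
particular `(a)` has `n ≥ 2`. If `i ≤ n`, then `(a) ∈ D₀^i` but the irreducible `a ∉ R₀^i`. If
`n < i`, then `x = a^m` with `m = ⌊i/n⌋ + 1` has `mn` prime ideal factors, `i < mn ≤ i + n < 2i`,
so `(x) ∈ D₀^i`, while writing `x` as a product of `i` nonunits would give at least `2i` factors.
-/

open Pointwise UniqueFactorizationMonoid

theorem mem_pow_nonunits_of_associated {M : Type*} [CommMonoid M] {k : ℕ} (hk : k ≠ 0) {x y : M}
    (hy : y ∈ nonunits M ^ k) (hyx : Associated y x) : x ∈ nonunits M ^ k := by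
  obtain ⟨k, rfl⟩ := Nat.exists_eq_succ_of_ne_zero hk
  obtain ⟨u, rfl⟩ := hyx
  rw [pow_succ] at hy ⊢
  obtain ⟨z, hz, s, hs, rfl⟩ := hy
  exact ⟨z, hz, s * u, (Units.isUnit_mul_units s u).not.mpr hs, (mul_assoc z s u).symm⟩

theorem Irreducible.notMem_pow_nonunits {M : Type*} [CommMonoid M] {a : M} (ha : Irreducible a)
    {k : ℕ} (hk : 2 ≤ k) : a ∉ nonunits M ^ k := by
  obtain ⟨k, rfl⟩ := Nat.exists_eq_add_of_le' hk
  intro h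
  rw [pow_succ'] at h
  obtain ⟨c, hc, d, hd, rfl⟩ := h
  rw [pow_succ] at hd
  obtain ⟨e, -, f, hf, rfl⟩ := hd
  exact (ha.isUnit_or_isUnit rfl).elim hc (mul_mem_nonunits_right hf)

namespace UniqueFactorizationMonoid

variable {α : Type*} [CommMonoidWithZero α] [NormalizationMonoid α] [UniqueFactorizationMonoid α]

theorem card_normalizedFactors_mul {x y : α} (hx : x ≠ 0) (hy : y ≠ 0) :
    Multiset.card (normalizedFactors (x * y)) =
      Multiset.card (normalizedFactors x) + Multiset.card (normalizedFactors y) := by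
  rw [normalizedFactors_mul hx hy, Multiset.card_add]

theorem prime_of_card_normalizedFactors_eq_one {x : α}
    (h : Multiset.card (normalizedFactors x) = 1) : Prime x := by
  obtain ⟨p, hp⟩ := Multiset.card_eq_one.mp h
  have hx : x ≠ 0 := by rintro rfl; simp at hp
  have hpx : Associated p x := by simpa [hp] using prod_normalizedFactors hx
  exact hpx.prime (prime_of_normalized_factor p (hp ▸ Multiset.mem_singleton_self p))

theorem mem_pow_nonunits_of_le_card_normalizedFactors {k : ℕ} (hk : k ≠ 0) {x : α}
    (h : k ≤ Multiset.card (normalizedFactors x)) : x ∈ nonunits α ^ k := by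
  induction k generalizing x with
  | zero => exact absurd rfl hk
  | succ k ih =>
    have hx : x ≠ 0 := by rintro rfl; simp at h
    have hxu : ¬IsUnit x := fun hu => by simp [normalizedFactors_of_isUnit hu] at h
    rcases eq_or_ne k 0 with rfl | hk
    · simpa using hxu
    obtain ⟨p, hp⟩ := exists_mem_normalizedFactors hx hxu
    obtain ⟨y, rfl⟩ := dvd_of_mem_normalizedFactors hp
    have hp' := prime_of_normalized_factor p hp
    rw [card_normalizedFactors_mul hp'.ne_zero (right_ne_zero_of_mul hx),
      normalizedFactors_irreducible hp'.irreducible, Multiset.card_singleton] at h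
    rw [pow_succ']
    exact Set.mul_mem_mul hp'.not_isUnit (ih hk (by omega))

theorem mul_le_card_normalizedFactors_of_mem_pow {S : Set α} {m k : ℕ} {x : α} (hx : x ≠ 0)
    (hS : ∀ s ∈ S, s ∣ x → m ≤ Multiset.card (normalizedFactors s)) (h : x ∈ S ^ k) :
    m * k ≤ Multiset.card (normalizedFactors x) := by
  induction k generalizing x with
  | zero => simp
  | succ k ih =>
    rw [pow_succ'] at h
    obtain ⟨s, hs, y, hy, rfl⟩ := h
    rw [card_normalizedFactors_mul (left_ne_zero_of_mul hx) (right_ne_zero_of_mul hx), mul_add_one,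
      add_comm]
    exact add_le_add (hS s hs (dvd_mul_right s y))
      (ih (right_ne_zero_of_mul hx) (fun t ht hty => hS t ht (hty.mul_left s)) hy)

end UniqueFactorizationMonoid

namespace Ideal

section CommSemiring

variable {R : Type*} [CommSemiring R]

theorem image_span_singleton_pow (S : Set R) (k : ℕ) :
    (fun y => span {y}) '' (S ^ k) = ((fun y => span {y}) '' S) ^ k :=
  Set.image_pow (⟨⟨fun y => span {y}, span_singleton_one.trans one_eq_top.symm⟩,
    fun _ _ => (span_singleton_mul_span_singleton _ _).symm⟩ : R →* Ideal R) S k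

theorem span_singleton_mem_pow_image {S : Set R} {k : ℕ} {x : R} (h : x ∈ S ^ k) :
    span {x} ∈ ((fun y => span {y}) '' S) ^ k :=
  image_span_singleton_pow S k ▸ Set.mem_image_of_mem _ h

theorem span_singleton_mem_pow_ne_top {k : ℕ} {x : R} (h : x ∈ nonunits R ^ k) :
    span {x} ∈ {I : Ideal R | I ≠ ⊤} ^ k :=
  Set.pow_subset_pow_left (by rintro _ ⟨y, hy, rfl⟩; exact mt span_singleton_eq_top.mp hy)
    (span_singleton_mem_pow_image h)

end CommSemiring

theorem mem_pow_nonunits_of_span_singleton_mem_pow {R : Type*} [CommRing R] [IsDomain R]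
    [IsPrincipalIdealRing R] {k : ℕ} (hk : k ≠ 0) {x : R}
    (h : span {x} ∈ {I : Ideal R | I ≠ ⊤} ^ k) : x ∈ nonunits R ^ k := by
  have hD : {I : Ideal R | I ≠ ⊤} ⊆ (fun y => span {y}) '' nonunits R := fun I hI =>
    ⟨Submodule.IsPrincipal.generator I,
      fun hu => hI (by rwa [← span_singleton_eq_top, span_singleton_generator] at hu),
      span_singleton_generator I⟩
  obtain ⟨y, hy, hyx⟩ : span {x} ∈ (fun y => span {y}) '' (nonunits R ^ k) :=
    image_span_singleton_pow (nonunits R) k ▸ Set.pow_subset_pow_left hD h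
  exact mem_pow_nonunits_of_associated hk hy (span_singleton_eq_span_singleton.mp hyx)

end Ideal

section IsDedekindDomain

variable {R : Type*} [CommRing R] [IsDedekindDomain R]

theorem IsDedekindDomain.exists_irreducible_not_prime (h : ¬IsPrincipalIdealRing R) :
    ∃ a : R, Irreducible a ∧ ¬Prime a := by
  by_contra! hR
  have : UniqueFactorizationMonoid R := { irreducible_iff_prime := ⟨hR _, Prime.irreducible⟩ }
  exact h (.of_isDedekindDomain_of_uniqueFactorizationMonoid R)

theorem Irreducible.two_le_card_normalizedFactors_span_of_dvd_pow {a f : R} (ha : Irreducible a)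
    (ha' : ¬Prime a) {n : ℕ} (hf : ¬IsUnit f) (hfa : f ∣ a ^ n) :
    2 ≤ Multiset.card (normalizedFactors (Ideal.span {f})) := by
  have hf0 : f ≠ 0 := by rintro rfl; exact pow_ne_zero n ha.ne_zero (zero_dvd_iff.mp hfa)
  have h0 : Multiset.card (normalizedFactors (Ideal.span {f})) ≠ 0 := by
    rwa [Ne, Multiset.card_eq_zero, normalizedFactors_eq_zero_iff (by simpa using hf0),
      Ideal.isUnit_iff, Ideal.span_singleton_eq_top]
  have h1 : Multiset.card (normalizedFactors (Ideal.span {f})) ≠ 1 := fun h1 => by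
    have hfp : Prime f := (Ideal.span_singleton_prime hf0).mp
      (Ideal.isPrime_of_prime (prime_of_card_normalizedFactors_eq_one h1))
    exact ha' ((hfp.irreducible.associated_of_dvd ha (hfp.dvd_of_dvd_pow hfa)).prime hfp)
  omega

theorem Irreducible.exists_span_mem_pow_ne_top_notMem_pow_nonunits {a : R} (ha : Irreducible a)
    (ha' : ¬Prime a) {i : ℕ} (hi : 2 ≤ i) :
    ∃ x : R, Ideal.span {x} ∈ {I : Ideal R | I ≠ ⊤} ^ i ∧ x ∉ nonunits R ^ i := by
  have hD : {I : Ideal R | I ≠ ⊤} = nonunits (Ideal R) := by ext; simp [Ideal.isUnit_iff]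
  set n := Multiset.card (normalizedFactors (Ideal.span {a}))
  have hn : 2 ≤ n := ha.two_le_card_normalizedFactors_span_of_dvd_pow ha' (n := 1)
    ha.not_isUnit (dvd_pow_self a one_ne_zero)
  rcases le_or_gt i n with hin | hni
  · exact ⟨a, hD ▸ mem_pow_nonunits_of_le_card_normalizedFactors (by omega) hin,
      ha.notMem_pow_nonunits hi⟩
  set m := i / n + 1
  have hm : Multiset.card (normalizedFactors (Ideal.span {a ^ m})) = m * n := by
    rw [← Ideal.span_singleton_pow, UniqueFactorizationMonoid.normalizedFactors_pow,
      Multiset.card_nsmul]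
  have hlt : i < m * n := by simpa [m, add_mul] using Nat.lt_div_mul_add (a := i) (by omega : 0 < n)
  have hle : m * n ≤ i + n := by simpa [m, add_mul] using Nat.div_mul_le_self i n
  refine ⟨a ^ m, hD ▸ mem_pow_nonunits_of_le_card_normalizedFactors (by omega) (by omega),
    fun h => ?_⟩
  have hS : ∀ s ∈ (fun y => Ideal.span {y}) '' nonunits R, s ∣ Ideal.span {a ^ m} →
      2 ≤ Multiset.card (normalizedFactors s) := by
    rintro _ ⟨f, hf, rfl⟩ hdvd
    exact ha.two_le_card_normalizedFactors_span_of_dvd_pow ha' hf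
      (Ideal.span_singleton_le_span_singleton.mp (Ideal.le_of_dvd hdvd))
  have := mul_le_card_normalizedFactors_of_mem_pow (by simpa using pow_ne_zero m ha.ne_zero) hS
    (Ideal.span_singleton_mem_pow_image h)
  omega

end IsDedekindDomain

/-- For a Dedekind domain `R`, `R₀ = {x | x not a unit}`, `D₀ = {I | I a proper
ideal}` and a fixed `i ≥ 2`: `R₀^i = {x | (x) ∈ D₀^i}` iff `R` is a principal
ideal domain. -/
theorem pow_nonunits_eq_preimage_iff_pid {R : Type*} [CommRing R] [IsDedekindDomain R]
    (i : ℕ) (hi : 2 ≤ i) :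
    (({x : R | ¬ IsUnit x} : Set R) ^ i
        = {x : R | Ideal.span {x} ∈ ({I : Ideal R | I ≠ ⊤} : Set (Ideal R)) ^ i}) ↔
      IsPrincipalIdealRing R := by
  constructor
  · intro h
    by_contra hR
    obtain ⟨a, ha, ha'⟩ := IsDedekindDomain.exists_irreducible_not_prime hR
    obtain ⟨x, hxD, hxR⟩ := ha.exists_span_mem_pow_ne_top_notMem_pow_nonunits ha' hi
    exact hxR (by rw [nonunits, h]; exact hxD)
  · intro _
    ext x
    exact ⟨Ideal.span_singleton_mem_pow_ne_top,
      Ideal.mem_pow_nonunits_of_span_singleton_mem_pow (by omega)⟩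
end

section
/- Let S be a Dedekind domain and A a nonzero proper ideal of S. Let X be a finite multiset of prime ideals of S, each containing A, and let T be a finite multiset of prime ideals of S such that the product of the members of T equals (the product of the members of X) + A. Then T is a sub-multiset of X; in particular the cardinality of T is at most that of X. (This says the prime factorization of an ideal of S containing A is the minimal prime factorization of the corresponding ideal of S/A: any prime factorization in S/A must include each of its factors.) -/
open UniqueFactorizationMonoid in
theorem Multiset.le_of_prod_dvd_prod_of_prime {α : Type*} [CommMonoidWithZero α] [Nontrivial α]
    [NormalizationMonoid α] [UniqueFactorizationMonoid α] [Subsingleton αˣ] {s t : Multiset α}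
    (hs : ∀ p ∈ s, Prime p) (ht : ∀ p ∈ t, Prime p) (hst : s.prod ∣ t.prod) :
    s ≤ t := by
  rwa [dvd_iff_normalizedFactors_le_normalizedFactors (s.prod_ne_zero_of_prime hs)
    (t.prod_ne_zero_of_prime ht), normalizedFactors_prod_of_prime hs,
    normalizedFactors_prod_of_prime ht] at hst

theorem Ideal.prime_of_isPrime_of_le {S : Type*} [CommRing S] [IsDedekindDomain S]
    {A P : Ideal S} (hA : A ≠ ⊥) (hP : P.IsPrime) (hAP : A ≤ P) : Prime P :=
  Ideal.prime_of_isPrime (ne_bot_of_le_ne_bot hA hAP) hP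

theorem multiset_prime_factorisation_minimal_general {S : Type*} [CommRing S] [IsDedekindDomain S]
    (A : Ideal S) (hA0 : A ≠ ⊥)
    (X T : Multiset (Ideal S))
    (hX : ∀ P ∈ X, P.IsPrime ∧ A ≤ P) (hT : ∀ P ∈ T, P.IsPrime)
    (h : T.prod = X.prod + A) :
    T ≤ X ∧ Multiset.card T ≤ Multiset.card X := by
  have hA_le : A ≤ T.prod := h ▸ le_sup_right
  have hT_prime : ∀ P ∈ T, Prime P := fun P hP ↦
    Ideal.prime_of_isPrime_of_le hA0 (hT P hP) <|
      hA_le.trans (Ideal.le_of_dvd (Multiset.dvd_prod hP))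
  have hX_prime : ∀ P ∈ X, Prime P := fun P hP ↦
    Ideal.prime_of_isPrime_of_le hA0 (hX P hP).1 (hX P hP).2
  have hdvd : T.prod ∣ X.prod := Ideal.dvd_iff_le.mpr (h ▸ le_sup_left)
  have hle : T ≤ X := Multiset.le_of_prod_dvd_prod_of_prime hT_prime hX_prime hdvd
  exact ⟨hle, Multiset.card_le_card hle⟩

/-- Minimality of the prime factorisation of an ideal of `S/A`: if `X` is a
multiset of prime ideals of a Dedekind domain `S`, each containing the nonzero
proper ideal `A`, and `T` is a multiset of prime ideals of `S` whose product is
`(∏ X) + A`, then `T` is a sub-multiset of `X`; in particular `|T| ≤ |X|`. -/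
theorem multiset_prime_factorisation_minimal {S : Type*} [CommRing S] [IsDedekindDomain S]
    (A : Ideal S) (hA0 : A ≠ ⊥) (hAtop : A ≠ ⊤)
    (X T : Multiset (Ideal S))
    (hX : ∀ P ∈ X, P.IsPrime ∧ A ≤ P) (hT : ∀ P ∈ T, P.IsPrime)
    (h : T.prod = X.prod + A) :
    T ≤ X ∧ Multiset.card T ≤ Multiset.card X :=
  multiset_prime_factorisation_minimal_general A hA0 X T hX hT h
end

section
/- Let S be a Dedekind domain, A an ideal of S, and R = S/A. For all x, y ∈ R, the principal ideals (x) and (y) are equal if and only if there exists a unit u of R with y = xu (i.e., x and y are associated). Equivalently, for every x ∈ R, the J-class xV_x of x in the multiplicative semigroup of R equals xU, where U is the group of units of R. -/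
/-!
If `(x) = (y)` in `R = S/A`, write `y = x a` and `x = y b`; then `x (1 - a b) = 0`, so
`x (a + t (1 - a b)) = y` for every `t`, and it suffices to make `a + t (1 - a b)` a unit.
For `A ≠ 0` the ring `R` is Artinian, hence has finitely many maximal ideals, and since `a` and
`1 - a b` are coprime the Chinese remainder theorem gives a `t` for which `a + t (1 - a b)`
avoids all of them. For `A = 0` the ring is the domain `S`, where `x (1 - a b) = 0` with `x ≠ 0`
already makes `a` a unit.
-/

theorem exists_isUnit_add_mul_of_isCoprime {R : Type*} [CommRing R] [Finite (MaximalSpectrum R)]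
    {a c : R} (h : IsCoprime a c) : ∃ t : R, IsUnit (a + t * c) := by
  classical
  obtain ⟨t, ht⟩ := Ideal.exists_forall_sub_mem_ideal
    (I := fun M : MaximalSpectrum R ↦ M.asIdeal)
    (fun _ _ ne ↦ Ideal.isCoprime_of_isMaximal (MaximalSpectrum.ext_iff.ne.mp ne))
    (fun M ↦ if a ∈ M.asIdeal then 1 else 0)
  refine ⟨t, by_contra fun hu ↦ ?_⟩
  obtain ⟨M, hM, hmem⟩ := exists_max_ideal_of_mem_nonunits hu
  obtain ⟨u, v, huv⟩ := h
  have htM := ht ⟨M, hM⟩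
  by_cases ha : a ∈ M
  · simp only [ha, if_true] at htM
    have hc : c ∈ M := by
      simpa [← sub_mul] using M.sub_mem (M.sub_mem hmem ha) (M.mul_mem_right c htM)
    exact hM.ne_top (M.eq_top_iff_one.mpr
      (huv ▸ M.add_mem (M.mul_mem_left u ha) (M.mul_mem_left v hc)))
  · simp only [ha, if_false, sub_zero] at htM
    exact ha (by simpa using M.sub_mem hmem (M.mul_mem_right c htM))

theorem associated_of_dvd_dvd_of_finite_maximalSpectrum {R : Type*} [CommRing R]
    [Finite (MaximalSpectrum R)] {x y : R} (hxy : x ∣ y) (hyx : y ∣ x) : Associated x y := by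
  obtain ⟨a, rfl⟩ := hxy
  obtain ⟨b, hb⟩ := hyx
  obtain ⟨t, ht⟩ := exists_isUnit_add_mul_of_isCoprime (a := a) (c := 1 - a * b) ⟨b, 1, by ring⟩
  refine ⟨ht.unit, ?_⟩
  rw [IsUnit.unit_spec]
  linear_combination t * hb

theorem isArtinianRing_quotient_of_ne_bot {R : Type*} [CommRing R] [IsDomain R]
    [IsNoetherianRing R] [Ring.DimensionLEOne R] {A : Ideal R} (hA : A ≠ ⊥) :
    IsArtinianRing (R ⧸ A) :=
  have : Ring.KrullDimLE 0 (R ⧸ A) :=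
    Ideal.krullDimLE_zero_quotient_iff_forall_minimalPrimes_isMaximal.mpr fun _ hP ↦
      hP.1.1.isMaximal (ne_bot_of_le_ne_bot hA hP.1.2)
  IsNoetherianRing.isArtinianRing_of_krullDimLE_zero

theorem Ideal.Quotient.associated_of_dvd_dvd {S : Type*} [CommRing S] [IsDedekindDomain S]
    {A : Ideal S} {x y : S ⧸ A} (hxy : x ∣ y) (hyx : y ∣ x) : Associated x y := by
  rcases eq_or_ne A ⊥ with rfl | hA
  · exact _root_.associated_of_dvd_dvd hxy hyx
  · have := isArtinianRing_quotient_of_ne_bot hA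
    exact associated_of_dvd_dvd_of_finite_maximalSpectrum hxy hyx

/-- In a quotient `R = S/A` of a Dedekind domain `S`, two elements generate the
same principal ideal iff they are associated (`y = xu` for a unit `u`);
equivalently, for every `x ∈ R` the `J`-class
`xV_x = {xu : u ∈ R, ∃ v, xuv = x}` of `x` equals `xU`, where `U` is the group
of units of `R`. -/
theorem span_eq_iff_associated_in_quotient {S : Type*} [CommRing S] [IsDedekindDomain S]
    (A : Ideal S) :
    (∀ x y : S ⧸ A, Ideal.span {x} = Ideal.span {y} ↔ ∃ u : (S ⧸ A)ˣ, y = x * u) ∧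
    (∀ x : S ⧸ A,
      {z : S ⧸ A | ∃ u : S ⧸ A, (∃ v : S ⧸ A, x * u * v = x) ∧ z = x * u}
        = {z : S ⧸ A | ∃ u : (S ⧸ A)ˣ, z = x * u}) := by
  refine ⟨fun x y ↦ ?_, fun x ↦ Set.ext fun z ↦ ⟨?_, ?_⟩⟩
  · rw [le_antisymm_iff, Ideal.span_singleton_le_span_singleton,
      Ideal.span_singleton_le_span_singleton]
    refine ⟨fun ⟨hyx, hxy⟩ ↦ ?_, ?_⟩
    · obtain ⟨u, hu⟩ := Ideal.Quotient.associated_of_dvd_dvd hxy hyx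
      exact ⟨u, hu.symm⟩
    · rintro ⟨u, rfl⟩
      exact (Associated.dvd_dvd ⟨u, rfl⟩).symm
  · rintro ⟨u, ⟨v, hv⟩, rfl⟩
    obtain ⟨w, hw⟩ := Ideal.Quotient.associated_of_dvd_dvd (dvd_mul_right x u) ⟨v, hv.symm⟩
    exact ⟨w, hw.symm⟩
  · rintro ⟨u, rfl⟩
    exact ⟨u, ⟨↑u⁻¹, u.mul_inv_cancel_right x⟩, rfl⟩
end
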